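/- Let L ≥ 1, N = 2^L, and let X_L, …, X_1 be complex N×N matrices with supp(X_ℓ) = S^ℓ (the ℓ-th butterfly support, exactly) for every 1 ≤ ℓ ≤ L. Let 1 ≤ p ≤ ℓ < q ≤ L and let D_q, D_p be invertible diagonal N×N matrices. Set X := D_q⁻¹ X_q ⋯ X_{ℓ+1} and Y := (X_ℓ ⋯ X_p D_p)ᵀ. Then for every pair (X', Y') of complex N×N matrices with supp(X') ⊆ W^[q;ℓ+1], supp(Y') ⊆ W^[ℓ;p] and X'Y'ᵀ = XYᵀ, there exists an invertible diagonal N×N matrix D such that X' = XD and Y' = YD⁻¹. -/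

import Mathlib

open Matrix

/-- The support of a matrix: the set of index pairs of its nonzero entries. -/
def msupp {N : ℕ} (M : Matrix (Fin N) (Fin N) ℂ) : Set (Fin N × Fin N) :=
  {p | M p.1 p.2 ≠ 0}

/-- The support of the binary matrix `W^[q;p] := I_{2^{L−q}} ⊗ U_{2^{q−p+1}} ⊗ I_{2^{p−1}}`
of size `2^L × 2^L` (with `U_n` the all-ones matrix): the entry `(i, j)` is nonzero iff
`i / 2^q = j / 2^q` and `i % 2^{p−1} = j % 2^{p−1}`.  The `ℓ`-th butterfly support
`S^ℓ = I_{2^{L−ℓ}} ⊗ U_2 ⊗ I_{2^{ℓ−1}}` is `W^[ℓ;ℓ]`. -/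
def wSupp (L q p : ℕ) : Set (Fin (2 ^ L) × Fin (2 ^ L)) :=
  {x | (x.1 : ℕ) / 2 ^ q = (x.2 : ℕ) / 2 ^ q ∧
       (x.1 : ℕ) % 2 ^ (p - 1) = (x.2 : ℕ) % 2 ^ (p - 1)}

/-- The partial product `X_q · X_{q−1} · ⋯ · X_p`. -/
noncomputable def pprod {N : ℕ} (X : ℕ → Matrix (Fin N) (Fin N) ℂ) (q p : ℕ) :
    Matrix (Fin N) (Fin N) ℂ :=
  (((List.range' p (q + 1 - p)).reverse).map X).prod

lemma mem_msupp {N : ℕ} {M : Matrix (Fin N) (Fin N) ℂ} {x : Fin N × Fin N} :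
    x ∈ msupp M ↔ M x.1 x.2 ≠ 0 := Iff.rfl

lemma mem_wSupp {L q p : ℕ} {x : Fin (2 ^ L) × Fin (2 ^ L)} :
    x ∈ wSupp L q p ↔ (x.1 : ℕ) / 2 ^ q = (x.2 : ℕ) / 2 ^ q ∧
      (x.1 : ℕ) % 2 ^ (p - 1) = (x.2 : ℕ) % 2 ^ (p - 1) := Iff.rfl

lemma wSupp_refl {L q p : ℕ} (i : Fin (2 ^ L)) : (i, i) ∈ wSupp L q p := ⟨rfl, rfl⟩

lemma wSupp_symm {L q p : ℕ} {i j : Fin (2 ^ L)} (h : (i, j) ∈ wSupp L q p) :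
    (j, i) ∈ wSupp L q p := ⟨h.1.symm, h.2.symm⟩

lemma merge_lt {L t : ℕ} (i k : Fin (2 ^ L)) :
    (k : ℕ) / 2 ^ t * 2 ^ t + (i : ℕ) % 2 ^ t < 2 ^ L := by
  rcases le_or_gt t L with h | h
  · calc (k : ℕ) / 2 ^ t * 2 ^ t + (i : ℕ) % 2 ^ t
        < (k : ℕ) / 2 ^ t * 2 ^ t + 2 ^ t :=
          Nat.add_lt_add_left (Nat.mod_lt _ ((by positivity))) _
      _ = ((k : ℕ) / 2 ^ t + 1) * 2 ^ t := by ring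
      _ ≤ 2 ^ (L - t) * 2 ^ t := by
          apply Nat.mul_le_mul_right
          have hk : (k : ℕ) < 2 ^ t * 2 ^ (L - t) := by
            rw [← pow_add, Nat.add_sub_cancel' h]; exact k.isLt
          exact Nat.succ_le_of_lt (Nat.div_lt_of_lt_mul hk)
      _ = 2 ^ L := by rw [← pow_add, Nat.sub_add_cancel h]
  · have h2 : (2:ℕ) ^ L ≤ 2 ^ t := Nat.pow_le_pow_right (by norm_num) h.le
    have hk0 : (k : ℕ) / 2 ^ t = 0 := Nat.div_eq_of_lt (lt_of_lt_of_le k.isLt h2)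
    have hi : (i : ℕ) % 2 ^ t = (i : ℕ) := Nat.mod_eq_of_lt (lt_of_lt_of_le i.isLt h2)
    simp [hk0, hi]

/-- The unique possible intermediate index. -/
def merge {L : ℕ} (t : ℕ) (i k : Fin (2 ^ L)) : Fin (2 ^ L) :=
  ⟨(k : ℕ) / 2 ^ t * 2 ^ t + (i : ℕ) % 2 ^ t, merge_lt i k⟩

lemma merge_mod {L t : ℕ} (i k : Fin (2 ^ L)) :
    ((merge t i k : Fin (2 ^ L)) : ℕ) % 2 ^ t = (i : ℕ) % 2 ^ t := by
  simp only [merge]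
  rw [Nat.mul_comm, Nat.mul_add_mod, Nat.mod_mod_of_dvd _ dvd_rfl]

lemma merge_div {L t : ℕ} (i k : Fin (2 ^ L)) :
    ((merge t i k : Fin (2 ^ L)) : ℕ) / 2 ^ t = (k : ℕ) / 2 ^ t := by
  have hpos : 0 < (2:ℕ) ^ t := (by positivity)
  have h1 : (i : ℕ) % 2 ^ t < 2 ^ t := Nat.mod_lt _ hpos
  simp only [merge]
  rw [Nat.mul_comm ((k : ℕ) / 2 ^ t) (2 ^ t), Nat.mul_add_div hpos,
    Nat.div_eq_of_lt h1, Nat.add_zero]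

lemma merge_unique {L t : ℕ} (i k m : Fin (2 ^ L))
    (h1 : (m : ℕ) % 2 ^ t = (i : ℕ) % 2 ^ t)
    (h2 : (m : ℕ) / 2 ^ t = (k : ℕ) / 2 ^ t) : m = merge t i k := by
  apply Fin.ext
  show (m : ℕ) = (k : ℕ) / 2 ^ t * 2 ^ t + (i : ℕ) % 2 ^ t
  calc (m : ℕ) = (m : ℕ) / 2 ^ t * 2 ^ t + (m : ℕ) % 2 ^ t := (Nat.div_add_mod' _ _).symm
    _ = (k : ℕ) / 2 ^ t * 2 ^ t + (i : ℕ) % 2 ^ t := by rw [h1, h2]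

lemma merge_eq_right {L t : ℕ} {i k : Fin (2 ^ L)}
    (h : (i : ℕ) % 2 ^ t = (k : ℕ) % 2 ^ t) : merge t i k = k := by
  apply Fin.ext
  show (k : ℕ) / 2 ^ t * 2 ^ t + (i : ℕ) % 2 ^ t = (k : ℕ)
  rw [h]; exact Nat.div_add_mod' _ _

lemma merge_eq_left {L t : ℕ} {k j : Fin (2 ^ L)}
    (h : (k : ℕ) / 2 ^ t = (j : ℕ) / 2 ^ t) : merge t k j = k := by
  apply Fin.ext
  show (j : ℕ) / 2 ^ t * 2 ^ t + (k : ℕ) % 2 ^ t = (k : ℕ)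
  rw [← h]; exact Nat.div_add_mod' _ _

/-- Key lemma: with compatible butterfly supports, only one summand can survive. -/
lemma mul_entry {L c t a : ℕ} {A B : Matrix (Fin (2 ^ L)) (Fin (2 ^ L)) ℂ}
    (hA : msupp A ⊆ wSupp L c (t + 1)) (hB : msupp B ⊆ wSupp L t a)
    (i k : Fin (2 ^ L)) :
    (A * B) i k = A i (merge t i k) * B (merge t i k) k := by
  rw [Matrix.mul_apply]
  apply Finset.sum_eq_single
  · intro m _ hne
    by_cases h1 : A i m = 0
    · simp [h1]
    by_cases h2 : B m k = 0
    · simp [h2]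
    exfalso
    apply hne
    have hA' : (i, m) ∈ wSupp L c (t + 1) := hA h1
    have hB' : (m, k) ∈ wSupp L t a := hB h2
    exact merge_unique i k m (by simpa using hA'.2.symm) hB'.1
  · intro h; exact absurd (Finset.mem_univ _) h

lemma div_pow_trans {c t : ℕ} (htc : t ≤ c) {x y : ℕ} (h : x / 2 ^ t = y / 2 ^ t) :
    x / 2 ^ c = y / 2 ^ c := by
  have e : (2:ℕ) ^ c = 2 ^ t * 2 ^ (c - t) := by rw [← pow_add, Nat.add_sub_cancel' htc]
  rw [e, ← Nat.div_div_eq_div_mul, ← Nat.div_div_eq_div_mul, h]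

lemma mod_pow_trans {a t : ℕ} (hat : a ≤ t) {x y : ℕ} (h : x % 2 ^ t = y % 2 ^ t) :
    x % 2 ^ a = y % 2 ^ a := by
  have hd : (2:ℕ) ^ a ∣ 2 ^ t := pow_dvd_pow 2 hat
  rw [← Nat.mod_mod_of_dvd x hd, ← Nat.mod_mod_of_dvd y hd, h]

/-- Support of a compatible product. -/
lemma msupp_mul {L c t a : ℕ} (htc : t ≤ c) (hat : a ≤ t + 1)
    {A B : Matrix (Fin (2 ^ L)) (Fin (2 ^ L)) ℂ}
    (hA : msupp A = wSupp L c (t + 1)) (hB : msupp B = wSupp L t a) :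
    msupp (A * B) = wSupp L c a := by
  have hA' : msupp A ⊆ wSupp L c (t + 1) := le_of_eq hA
  have hB' : msupp B ⊆ wSupp L t a := le_of_eq hB
  ext ⟨i, k⟩
  rw [mem_msupp, mul_entry hA' hB' i k]
  constructor
  · intro h
    have h1 : A i (merge t i k) ≠ 0 := fun hz => h (by simp [hz])
    have h2 : B (merge t i k) k ≠ 0 := fun hz => h (by simp [hz])
    have m1 : (i, merge t i k) ∈ wSupp L c (t + 1) := hA' h1
    have m2 : (merge t i k, k) ∈ wSupp L t a := hB' h2
    refine ⟨m1.1.trans (div_pow_trans htc m2.1), ?_⟩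
    have e1 : (i : ℕ) % 2 ^ (a - 1) = ((merge t i k : Fin (2 ^ L)) : ℕ) % 2 ^ (a - 1) :=
      mod_pow_trans (t := t) (by omega) (by simpa using m1.2)
    exact e1.trans m2.2
  · intro h
    have m1 : (i, merge t i k) ∈ wSupp L c (t + 1) := by
      refine ⟨h.1.trans (div_pow_trans htc (merge_div i k)).symm, ?_⟩
      simpa using (merge_mod i k).symm
    have m2 : (merge t i k, k) ∈ wSupp L t a := by
      refine ⟨merge_div i k, ?_⟩
      exact (mod_pow_trans (by omega) (merge_mod i k)).trans h.2
    have n1 : A i (merge t i k) ≠ 0 := (Set.ext_iff.mp hA _).mpr m1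
    have n2 : B (merge t i k) k ≠ 0 := (Set.ext_iff.mp hB _).mpr m2
    exact mul_ne_zero n1 n2

lemma pprod_self {N : ℕ} (X : ℕ → Matrix (Fin N) (Fin N) ℂ) (p : ℕ) :
    pprod X p p = X p := by
  simp [pprod]

lemma pprod_step {N : ℕ} (X : ℕ → Matrix (Fin N) (Fin N) ℂ) {p q : ℕ} (h : p ≤ q) :
    pprod X (q + 1) p = X (q + 1) * pprod X q p := by
  unfold pprod
  have h1 : q + 1 + 1 - p = (q + 1 - p) + 1 := by omega
  have h2 : p + (q + 1 - p) = q + 1 := by omega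
  rw [h1, show List.range' p (q + 1 - p + 1) = List.range' p (q + 1 - p) ++ [p + (q + 1 - p)]
      from by simpa using (List.range'_concat (s := p) (n := q + 1 - p) (step := 1)),
    h2]
  simp

lemma pprod_supp {L : ℕ} (X : ℕ → Matrix (Fin (2 ^ L)) (Fin (2 ^ L)) ℂ)
    (hsupp : ∀ k, 1 ≤ k → k ≤ L → msupp (X k) = wSupp L k k)
    {p q : ℕ} (hp : 1 ≤ p) (hpq : p ≤ q) (hq : q ≤ L) :
    msupp (pprod X q p) = wSupp L q p := by
  induction q, hpq using Nat.le_induction with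
  | base => rw [pprod_self]; exact hsupp p hp hq
  | succ q hpq ih =>
    rw [pprod_step X hpq]
    have hA : msupp (X (q + 1)) = wSupp L (q + 1) (q + 1) := hsupp (q + 1) (by omega) hq
    exact msupp_mul (show q ≤ q + 1 by omega) (show p ≤ q + 1 by omega) hA (ih (by omega))

lemma msupp_diag_mul {N : ℕ} {d : Fin N → ℂ} (hd : ∀ i, d i ≠ 0)
    (M : Matrix (Fin N) (Fin N) ℂ) : msupp (Matrix.diagonal d * M) = msupp M := by
  ext ⟨i, j⟩
  simp [mem_msupp, Matrix.diagonal_mul, hd i]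

lemma msupp_mul_diag {N : ℕ} {d : Fin N → ℂ} (hd : ∀ i, d i ≠ 0)
    (M : Matrix (Fin N) (Fin N) ℂ) : msupp (M * Matrix.diagonal d) = msupp M := by
  ext ⟨i, j⟩
  simp [mem_msupp, Matrix.mul_diagonal, hd j]

/-- Let `L ≥ 1`, `N = 2^L`, and `X_L, …, X_1` with
`supp X_ℓ = S^ℓ` (the butterfly supports) exactly.  Let `1 ≤ p ≤ ℓ < q ≤ L`, and
`D_q, D_p` invertible diagonal matrices.  Set `X := D_q⁻¹ X_q ⋯ X_{ℓ+1}` and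
`Y := (X_ℓ ⋯ X_p D_p)ᵀ`.  Then every pair `(X', Y')` with `supp X' ⊆ W^[q;ℓ+1]`,
`supp Y' ⊆ W^[ℓ;p]` and `X' Y'ᵀ = X Yᵀ` satisfies `X' = X D` and `Y' = Y D⁻¹` for some
invertible diagonal matrix `D`. -/
theorem butterfly_hierarchical_level_S_unique (L p ℓ q : ℕ)
    (hp : 1 ≤ p) (hpl : p ≤ ℓ) (hlq : ℓ < q) (hqL : q ≤ L)
    (X : ℕ → Matrix (Fin (2 ^ L)) (Fin (2 ^ L)) ℂ)
    (hsupp : ∀ k, 1 ≤ k → k ≤ L → msupp (X k) = wSupp L k k)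
    (dq dp : Fin (2 ^ L) → ℂ) (hdq : ∀ i, dq i ≠ 0) (hdp : ∀ i, dp i ≠ 0)
    (X' Y' : Matrix (Fin (2 ^ L)) (Fin (2 ^ L)) ℂ)
    (hX' : msupp X' ⊆ wSupp L q (ℓ + 1)) (hY' : msupp Y' ⊆ wSupp L ℓ p)
    (hfact : X' * Y'ᵀ =
      (Matrix.diagonal (fun i => (dq i)⁻¹) * pprod X q (ℓ + 1)) *
        ((pprod X ℓ p * Matrix.diagonal dp)ᵀ)ᵀ) :
    ∃ d : Fin (2 ^ L) → ℂ, (∀ i, d i ≠ 0) ∧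
      X' = Matrix.diagonal (fun i => (dq i)⁻¹) * pprod X q (ℓ + 1) * Matrix.diagonal d ∧
      Y' = (pprod X ℓ p * Matrix.diagonal dp)ᵀ * Matrix.diagonal fun i => (d i)⁻¹ := by
  have hG : msupp (pprod X q (ℓ + 1)) = wSupp L q (ℓ + 1) :=
    pprod_supp X hsupp (by omega) (by omega) hqL
  have hH : msupp (pprod X ℓ p) = wSupp L ℓ p :=
    pprod_supp X hsupp hp hpl (by omega)
  set A := Matrix.diagonal (fun i => (dq i)⁻¹) * pprod X q (ℓ + 1) with hAdef
  set B := pprod X ℓ p * Matrix.diagonal dp with hBdef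
  have hA : msupp A = wSupp L q (ℓ + 1) := by
    rw [hAdef, msupp_diag_mul (fun i => inv_ne_zero (hdq i)), hG]
  have hB : msupp B = wSupp L ℓ p := by
    rw [hBdef, msupp_mul_diag hdp, hH]
  have hfact' : X' * Y'ᵀ = A * B := by
    rw [hfact, Matrix.transpose_transpose]
  have hY'T : msupp Y'ᵀ ⊆ wSupp L ℓ p := by
    rintro ⟨m, k⟩ hx
    have hk : Y' k m ≠ 0 := by simpa [mem_msupp] using hx
    exact wSupp_symm (hY' hk)
  have key : ∀ i k, X' i (merge ℓ i k) * Y'ᵀ (merge ℓ i k) k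
      = A i (merge ℓ i k) * B (merge ℓ i k) k := by
    intro i k
    rw [← mul_entry hX' hY'T i k, ← mul_entry (subset_of_eq hA) (subset_of_eq hB) i k, hfact']
  have hAkk : ∀ k, A k k ≠ 0 := fun k => (Set.ext_iff.mp hA _).mpr (wSupp_refl k)
  have hBkk : ∀ k, B k k ≠ 0 := fun k => (Set.ext_iff.mp hB _).mpr (wSupp_refl k)
  have keyW1 : ∀ i k, (i, k) ∈ wSupp L q (ℓ + 1) →
      X' i k * Y' k k = A i k * B k k := by
    intro i k h
    have hm : merge ℓ i k = k := merge_eq_right (by simpa using h.2)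
    have := key i k
    rw [hm] at this
    simpa using this
  have keyW2 : ∀ j k, (j, k) ∈ wSupp L ℓ p →
      X' k k * Y' j k = A k k * B k j := by
    intro j k h
    have hm : merge ℓ k j = k := merge_eq_left h.1.symm
    have := key k j
    rw [hm] at this
    simpa using this
  have diagEq : ∀ k, X' k k * Y' k k = A k k * B k k := fun k => keyW1 k k (wSupp_refl k)
  have hXkk : ∀ k, X' k k ≠ 0 := by
    intro k h
    exact mul_ne_zero (hAkk k) (hBkk k) (by rw [← diagEq k, h, zero_mul])
  have hYkk : ∀ k, Y' k k ≠ 0 := by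
    intro k h
    exact mul_ne_zero (hAkk k) (hBkk k) (by rw [← diagEq k, h, mul_zero])
  refine ⟨fun k => X' k k / A k k, fun k => div_ne_zero (hXkk k) (hAkk k), ?_, ?_⟩
  · ext i k
    rw [Matrix.mul_diagonal]
    by_cases h : (i, k) ∈ wSupp L q (ℓ + 1)
    · have e1 := keyW1 i k h
      have e2 := diagEq k
      rw [← mul_div_assoc, eq_div_iff (hAkk k)]
      exact mul_right_cancel₀ (hYkk k) (by linear_combination A k k * e1 - A i k * e2)
    · have z1 : X' i k = 0 := by by_contra hc; exact h (hX' hc)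
      have z2 : A i k = 0 := by by_contra hc; exact h ((Set.ext_iff.mp hA _).mp hc)
      rw [z1, z2, zero_mul]
  · ext j k
    rw [Matrix.mul_diagonal, Matrix.transpose_apply]
    by_cases h : (j, k) ∈ wSupp L ℓ p
    · have e := keyW2 j k h
      rw [inv_div, ← mul_div_assoc, eq_div_iff (hXkk k)]
      linear_combination e
    · have z1 : Y' j k = 0 := by by_contra hc; exact h (hY' hc)
      have z2 : B k j = 0 := by
        by_contra hc
        exact h (wSupp_symm ((Set.ext_iff.mp hB _).mp hc))
      rw [z1, z2, zero_mul]
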